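/- arXiv:2007.11300 — 2 statements merged into one kernel-verified Lean document; each statement's English description precedes it below -/
import Mathlib

section
/- Let 0 < γ < 1 and ν > 1/2. Then for all x > 0, ∫_0^x e^{−γt} t^ν I_ν(t) dt > (1/(1−γ)) · ( 1 − 4ν(2ν+5) / ((2ν−1)(1−γ)x) ) · e^{−γx} x^ν I_ν(x). -/
open Real MeasureTheory

/-- Modified Bessel function of the first kind, `I_ν(x) = ∑_{k} (x/2)^{ν+2k} / (Γ(ν+k+1) k!)`. -/
noncomputable def besselI (ν x : ℝ) : ℝ :=
  ∑' k : ℕ, (x / 2) ^ (ν + 2 * (k : ℝ)) / (Real.Gamma (ν + (k : ℝ) + 1) * (Nat.factorial k : ℝ))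

/-- Modified Bessel function of the second kind, `K_ν(x) = ∫_0^∞ e^{-x cosh t} cosh(ν t) dt`. -/
noncomputable def besselK (ν x : ℝ) : ℝ :=
  ∫ t in Set.Ioi (0 : ℝ), Real.exp (-x * Real.cosh t) * Real.cosh (ν * t)

/-- Lower incomplete gamma function `γ(a, x) = ∫_0^x t^{a-1} e^{-t} dt`. -/
noncomputable def lowerIncGamma (a x : ℝ) : ℝ :=
  ∫ t in (0 : ℝ)..x, t ^ (a - 1) * Real.exp (-t)

/-! Write `F(t) = e^{-γt} t^ν I_ν(t)` and `A = 4ν(2ν+5)/((2ν-1)(1-γ))`. Differentiating the series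
termwise gives `(t^ν I_ν)' = t^ν I_{ν-1}`, and the recurrence `I_{ν-1} = (2ν/t) I_ν + I_{ν+1}`
together with `I_{ν+1} ≤ I_ν` bounds `I_{ν-1} ≤ (2ν/t + 1) I_ν`. Hence for `t ≥ A` the derivative of
`(1 - A/t) F(t)` is at most `(1-γ) F(t)`, since `2ν ≤ (1-γ) A` and `ν ≥ 1/2`. Integrating over `[A, x]`
gives `(1 - A/x) F(x) ≤ (1-γ) ∫_A^x F < (1-γ) ∫_0^x F`; for `x ≤ A` the right-hand side of the claim
is not positive. -/

open Filter Topology Set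

noncomputable def besselITerm (ν : ℝ) (k : ℕ) (t : ℝ) : ℝ :=
  (t / 2) ^ (ν + 2 * (k : ℝ)) / (Real.Gamma (ν + (k : ℝ) + 1) * (Nat.factorial k : ℝ))

lemma besselI_eq_tsum (ν t : ℝ) : besselI ν t = ∑' k, besselITerm ν k t := rfl

noncomputable def besselICoeff (ν : ℝ) (k : ℕ) : ℝ :=
  ((2 : ℝ) ^ (ν + 2 * (k : ℝ)) * (Real.Gamma (ν + (k : ℝ) + 1) * (Nat.factorial k : ℝ)))⁻¹

section BesselTerms

variable {ν t : ℝ}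

lemma add_natCast_add_one_pos (hν : -1 < ν) (k : ℕ) : 0 < ν + k + 1 := by
  linarith [(k.cast_nonneg : (0 : ℝ) ≤ k)]

lemma Gamma_add_natCast_add_one_pos (hν : -1 < ν) (k : ℕ) : 0 < Gamma (ν + k + 1) :=
  Gamma_pos_of_pos (add_natCast_add_one_pos hν k)

lemma besselICoeff_pos (hν : -1 < ν) (k : ℕ) : 0 < besselICoeff ν k := by
  have := Gamma_add_natCast_add_one_pos hν k
  unfold besselICoeff
  positivity

lemma besselITerm_eq_coeff_mul (ν : ℝ) (k : ℕ) (ht : 0 ≤ t) :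
    besselITerm ν k t = besselICoeff ν k * t ^ (ν + 2 * (k : ℝ)) := by
  rw [besselITerm, besselICoeff, div_rpow ht zero_le_two]
  field_simp

lemma besselITerm_nonneg (hν : -1 < ν) (k : ℕ) (ht : 0 ≤ t) : 0 ≤ besselITerm ν k t := by
  have := Gamma_add_natCast_add_one_pos hν k
  unfold besselITerm
  positivity

lemma besselITerm_pos (hν : -1 < ν) (k : ℕ) (ht : 0 < t) : 0 < besselITerm ν k t := by
  rw [besselITerm_eq_coeff_mul ν k ht.le]
  exact mul_pos (besselICoeff_pos hν k) (rpow_pos_of_pos ht _)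

lemma rpow_mul_besselITerm (μ ν : ℝ) (k : ℕ) (ht : 0 < t) :
    t ^ μ * besselITerm ν k t = besselICoeff ν k * t ^ (μ + ν + 2 * (k : ℝ)) := by
  rw [besselITerm_eq_coeff_mul ν k ht.le, mul_left_comm, ← rpow_add ht, add_assoc]

lemma besselITerm_succ (hν : -1 < ν) (k : ℕ) (ht : 0 < t) :
    besselITerm ν (k + 1) t = (t / 2) ^ 2 / ((ν + k + 1) * (k + 1)) * besselITerm ν k t := by
  have hc := (add_natCast_add_one_pos hν k).ne'
  have := Gamma_add_natCast_add_one_pos hν k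
  rw [besselITerm, besselITerm, Nat.factorial_succ, Nat.cast_mul, Nat.cast_add_one,
    show ν + ((k : ℝ) + 1) + 1 = (ν + k + 1) + 1 by ring, Gamma_add_one hc,
    show ν + 2 * ((k : ℝ) + 1) = (ν + 2 * k) + (2 : ℕ) by push_cast; ring,
    rpow_add_natCast (by positivity)]
  field_simp

lemma besselITerm_add_one (hν : -1 < ν) (k : ℕ) (ht : 0 < t) :
    besselITerm (ν + 1) k t = t / 2 / (ν + k + 1) * besselITerm ν k t := by
  have hc := (add_natCast_add_one_pos hν k).ne'
  have := Gamma_add_natCast_add_one_pos hν k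
  rw [besselITerm, besselITerm, show ν + 1 + (k : ℝ) + 1 = (ν + k + 1) + 1 by ring,
    Gamma_add_one hc, show ν + 1 + 2 * (k : ℝ) = (ν + 2 * k) + 1 by ring,
    rpow_add_one (by positivity)]
  field_simp

lemma summable_besselITerm (hν : -1 < ν) (ht : 0 < t) : Summable (besselITerm ν · t) := by
  refine summable_of_ratio_test_tendsto_lt_one zero_lt_one
    (Eventually.of_forall fun k => (besselITerm_pos hν k ht).ne') ?_
  have hratio : ∀ k : ℕ, ‖besselITerm ν (k + 1) t‖ / ‖besselITerm ν k t‖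
      = (t / 2) ^ 2 / ((ν + k + 1) * (k + 1)) := fun k => by
    have := add_natCast_add_one_pos hν k
    rw [besselITerm_succ hν k ht, norm_mul, mul_div_assoc,
      div_self (norm_pos_iff.mpr (besselITerm_pos hν k ht).ne').ne', mul_one,
      Real.norm_of_nonneg (by positivity)]
  simp_rw [hratio]
  have hk := tendsto_natCast_atTop_atTop (R := ℝ)
  exact tendsto_const_nhds.div_atTop
    ((tendsto_atTop_add_const_right _ 1 (tendsto_atTop_add_const_left _ ν hk)).atTop_mul_atTop₀
      (tendsto_atTop_add_const_right _ 1 hk))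

end BesselTerms

section BesselSeries

variable {ν t : ℝ}

lemma besselI_pos (hν : -1 < ν) (ht : 0 < t) : 0 < besselI ν t :=
  (summable_besselITerm hν ht).tsum_pos (fun k => (besselITerm_pos hν k ht).le) 0
    (besselITerm_pos hν 0 ht)

lemma besselI_nonneg (hν : -1 < ν) (ht : 0 ≤ t) : 0 ≤ besselI ν t :=
  tsum_nonneg fun k => besselITerm_nonneg hν k ht

lemma besselITerm_add_one_eq_succ (hν : -1 < ν) (k : ℕ) (ht : 0 < t) :
    besselITerm (ν + 1) k t = 2 * (k + 1) / t * besselITerm ν (k + 1) t := by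
  have := add_natCast_add_one_pos hν k
  rw [besselITerm_add_one hν k ht, besselITerm_succ hν k ht]
  field_simp

lemma besselITerm_sub_one (hν : 0 < ν) (k : ℕ) (ht : 0 < t) :
    besselITerm (ν - 1) k t = (2 * ν + 2 * k) / t * besselITerm ν k t := by
  have hc := add_natCast_add_one_pos (show -1 < ν - 1 by linarith) k
  have h := besselITerm_add_one (show -1 < ν - 1 by linarith) k ht
  rw [sub_add_cancel] at h
  rw [h]
  field_simp
  ring

lemma besselI_sub_one (hν : 0 < ν) (ht : 0 < t) :
    besselI (ν - 1) t = 2 * ν / t * besselI ν t + besselI (ν + 1) t := by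
  set u : ℕ → ℝ := fun k => 2 * k / t * besselITerm ν k t with hu_def
  have hshift : ∀ k : ℕ, u (k + 1) = besselITerm (ν + 1) k t := fun k => by
    rw [besselITerm_add_one_eq_succ (by linarith) k ht, hu_def]
    push_cast
    rfl
  have hu : Summable u := (summable_nat_add_iff 1).mp
    ((summable_besselITerm (by linarith) ht).congr fun k => (hshift k).symm)
  have hsplit : ∀ k : ℕ, besselITerm (ν - 1) k t = 2 * ν / t * besselITerm ν k t + u k :=
    fun k => by rw [besselITerm_sub_one hν k ht, hu_def]; ring
  calc besselI (ν - 1) t = ∑' k, (2 * ν / t * besselITerm ν k t + u k) := tsum_congr hsplit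
    _ = 2 * ν / t * besselI ν t + ∑' k, u k := by
      rw [((summable_besselITerm (by linarith) ht).mul_left _).tsum_add hu, tsum_mul_left,
        besselI_eq_tsum]
    _ = 2 * ν / t * besselI ν t + besselI (ν + 1) t := by
      have hu0 : u 0 = 0 := by simp [hu_def]
      rw [hu.tsum_eq_zero_add, hu0, zero_add, tsum_congr hshift]
      rfl

lemma besselITerm_add_one_le (hν : 0 ≤ ν) (k : ℕ) (ht : 0 < t) :
    besselITerm (ν + 1) k t ≤ (besselITerm ν k t + besselITerm ν (k + 1) t) / 2 := by
  have hν' : -1 < ν := by linarith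
  have hT := (besselITerm_pos hν' k ht).le
  have hm : (0 : ℝ) < k + 1 := by positivity
  have hc : (k : ℝ) + 1 ≤ ν + k + 1 := by linarith
  rw [besselITerm_add_one hν' k ht, besselITerm_succ hν' k ht]
  -- AM-GM: `2ym ≤ y² + m² ≤ y² + cm` for `y = t/2`, `m = k + 1 ≤ c = ν + k + 1`.
  have hcoef : t / 2 / (ν + k + 1) ≤ (1 + (t / 2) ^ 2 / ((ν + k + 1) * (k + 1))) / 2 := by
    have hc0 : (0 : ℝ) < ν + k + 1 := by linarith
    have hdiff : (1 + (t / 2) ^ 2 / ((ν + k + 1) * (k + 1))) / 2 - t / 2 / (ν + k + 1)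
        = ((t / 2 - (k + 1)) ^ 2 + (k + 1) * ((ν + k + 1) - (k + 1)))
          / (2 * (ν + k + 1) * (k + 1)) := by
      field_simp
      ring
    have : 0 ≤ (1 + (t / 2) ^ 2 / ((ν + k + 1) * (k + 1))) / 2 - t / 2 / (ν + k + 1) := by
      rw [hdiff]
      exact div_nonneg (add_nonneg (sq_nonneg _) (mul_nonneg hm.le (by linarith))) (by positivity)
    linarith
  nlinarith [mul_le_mul_of_nonneg_right hcoef hT]

lemma besselI_add_one_le (hν : 0 ≤ ν) (ht : 0 < t) : besselI (ν + 1) t ≤ besselI ν t := by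
  have hs := summable_besselITerm (show -1 < ν by linarith) ht
  have hs' : Summable fun k => besselITerm ν (k + 1) t := (summable_nat_add_iff 1).mpr hs
  have htail := hs.tsum_eq_zero_add
  have hhead := besselITerm_pos (show -1 < ν by linarith) 0 ht
  calc besselI (ν + 1) t ≤ ∑' k, (besselITerm ν k t + besselITerm ν (k + 1) t) / 2 :=
        (summable_besselITerm (by linarith) ht).tsum_le_tsum (besselITerm_add_one_le hν · ht)
          ((hs.add hs').div_const 2)
    _ = (besselI ν t + (besselI ν t - besselITerm ν 0 t)) / 2 := by
      rw [tsum_div_const, hs.tsum_add hs', besselI_eq_tsum, htail]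
      ring
    _ ≤ besselI ν t := by linarith

lemma besselI_sub_one_le (hν : 0 < ν) (ht : 0 < t) :
    besselI (ν - 1) t ≤ (2 * ν / t + 1) * besselI ν t := by
  rw [besselI_sub_one hν ht, add_mul, one_mul]
  exact add_le_add_right (besselI_add_one_le hν.le ht) _

end BesselSeries

section Monotone

variable {μ ν s t : ℝ}

lemma rpow_mul_besselITerm_le (hν : -1 < ν) (hμν : 0 ≤ μ + ν) (k : ℕ) (hs : 0 < s)
    (hst : s ≤ t) : s ^ μ * besselITerm ν k s ≤ t ^ μ * besselITerm ν k t := by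
  rw [rpow_mul_besselITerm μ ν k hs, rpow_mul_besselITerm μ ν k (hs.trans_le hst)]
  exact mul_le_mul_of_nonneg_left (rpow_le_rpow hs.le hst (by positivity))
    (besselICoeff_pos hν k).le

lemma rpow_mul_besselI_le (hν : -1 < ν) (hμν : 0 ≤ μ + ν) (hs : 0 < s) (hst : s ≤ t) :
    s ^ μ * besselI ν s ≤ t ^ μ * besselI ν t := by
  have ht := hs.trans_le hst
  simp only [besselI_eq_tsum, ← tsum_mul_left]
  exact ((summable_besselITerm hν hs).mul_left _).tsum_le_tsum
    (rpow_mul_besselITerm_le hν hμν · hs hst) ((summable_besselITerm hν ht).mul_left _)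

end Monotone

section Derivative

variable {ν t : ℝ}

lemma hasDerivAt_rpow_mul_besselITerm (hν : 0 < ν) (k : ℕ) (ht : 0 < t) :
    HasDerivAt (fun s => s ^ ν * besselITerm ν k s) (t ^ ν * besselITerm (ν - 1) k t) t := by
  have hpow : (fun s => s ^ ν * besselITerm ν k s)
      =ᶠ[𝓝 t] fun s => besselICoeff ν k * s ^ (ν + ν + 2 * (k : ℝ)) := by
    filter_upwards [eventually_gt_nhds ht] with s hs using rpow_mul_besselITerm ν ν k hs
  refine (((hasDerivAt_rpow_const (Or.inl ht.ne')).const_mul _).congr_of_eventuallyEq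
    hpow).congr_deriv ?_
  rw [besselITerm_sub_one hν k ht, mul_left_comm (t ^ ν), rpow_mul_besselITerm ν ν k ht,
    rpow_sub_one ht.ne']
  field_simp
  ring

lemma hasDerivAt_rpow_mul_besselI (hν : 1 / 2 ≤ ν) (ht : 0 < t) :
    HasDerivAt (fun s => s ^ ν * besselI ν s) (t ^ ν * besselI (ν - 1) t) t := by
  have h2t : 0 < 2 * t := by linarith
  have hderiv := hasDerivAt_tsum_of_isPreconnected (t := Ioo 0 (2 * t)) (y₀ := t)
    (g := fun k s => s ^ ν * besselITerm ν k s) (g' := fun k s => s ^ ν * besselITerm (ν - 1) k s)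
    ((summable_besselITerm (ν := ν - 1) (by linarith) h2t).mul_left ((2 * t) ^ ν)) isOpen_Ioo
    isPreconnected_Ioo (fun k s hs => hasDerivAt_rpow_mul_besselITerm (by linarith) k hs.1)
    (fun k s hs => by
      rw [Real.norm_of_nonneg (mul_nonneg (rpow_nonneg hs.1.le _)
        (besselITerm_pos (by linarith) k hs.1).le)]
      exact rpow_mul_besselITerm_le (by linarith) (by linarith) k hs.1 hs.2.le)
    ⟨ht, by linarith⟩ ((summable_besselITerm (by linarith) ht).mul_left _) ⟨ht, by linarith⟩
  simpa only [tsum_mul_left, ← besselI_eq_tsum] using hderiv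

end Derivative

noncomputable def expWeightedBesselI (γ ν t : ℝ) : ℝ := exp (-γ * t) * t ^ ν * besselI ν t

section Weighted

variable {γ ν A a b t : ℝ}

lemma expWeightedBesselI_eq_mul :
    expWeightedBesselI γ ν = fun t => exp (-γ * t) * (t ^ ν * besselI ν t) := by
  funext t
  exact mul_assoc _ _ _

lemma expWeightedBesselI_pos (hν : -1 < ν) (ht : 0 < t) : 0 < expWeightedBesselI γ ν t := by
  have := besselI_pos hν ht
  unfold expWeightedBesselI
  positivity

lemma monotoneOn_rpow_mul_besselI (hν : 0 < ν) :
    MonotoneOn (fun t => t ^ ν * besselI ν t) (Ici 0) := by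
  intro s (hs : 0 ≤ s) t (ht : 0 ≤ t) hst
  dsimp only
  rcases hs.eq_or_lt with rfl | hs
  · rw [zero_rpow hν.ne', zero_mul]
    exact mul_nonneg (rpow_nonneg ht _) (besselI_nonneg (by linarith) ht)
  · exact rpow_mul_besselI_le (by linarith) (by linarith) hs hst

lemma intervalIntegrable_expWeightedBesselI (hν : 0 < ν) (ha : 0 ≤ a) (hb : 0 ≤ b) :
    IntervalIntegrable (expWeightedBesselI γ ν) volume a b := by
  have hsub : uIcc a b ⊆ Ici 0 := fun t ht => (le_inf ha hb).trans ht.1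
  have hmono := (monotoneOn_rpow_mul_besselI hν).mono hsub
  rw [expWeightedBesselI_eq_mul]
  exact (hmono.intervalIntegrable (μ := volume)).continuousOn_mul
    (by fun_prop : Continuous fun t => exp (-γ * t)).continuousOn

lemma integral_expWeightedBesselI_pos (hν : 0 < ν) (hb : 0 < b) :
    0 < ∫ t in (0 : ℝ)..b, expWeightedBesselI γ ν t :=
  intervalIntegral.intervalIntegral_pos_of_pos_on
    (intervalIntegrable_expWeightedBesselI hν le_rfl hb.le)
    (fun _ ht => expWeightedBesselI_pos (by linarith) ht.1) hb

lemma hasDerivAt_expWeightedBesselI (hν : 1 / 2 ≤ ν) (ht : 0 < t) :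
    HasDerivAt (expWeightedBesselI γ ν)
      (-γ * expWeightedBesselI γ ν t + exp (-γ * t) * (t ^ ν * besselI (ν - 1) t)) t := by
  have hexp : HasDerivAt (fun s => exp (-γ * s)) (exp (-γ * t) * (-γ * 1)) t :=
    ((hasDerivAt_id t).const_mul (-γ)).exp
  rw [expWeightedBesselI_eq_mul]
  exact (hexp.mul (hasDerivAt_rpow_mul_besselI hν ht)).congr_deriv (by ring)

-- The left-hand side is the derivative of `t ↦ (1 - A / t) * expWeightedBesselI γ ν t`.
lemma deriv_one_sub_div_mul_expWeightedBesselI_le (hν : 1 / 2 ≤ ν) (hA : 0 < A)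
    (hAν : 2 * ν ≤ (1 - γ) * A) (hAt : A ≤ t) :
    A / t ^ 2 * expWeightedBesselI γ ν t
        + (1 - A / t) * (-γ * expWeightedBesselI γ ν t + exp (-γ * t) * (t ^ ν * besselI (ν - 1) t))
      ≤ (1 - γ) * expWeightedBesselI γ ν t := by
  have ht : 0 < t := hA.trans_le hAt
  set F := expWeightedBesselI γ ν t with hF_def
  have hF : 0 ≤ F := (expWeightedBesselI_pos (by linarith) ht).le
  have hL : exp (-γ * t) * (t ^ ν * besselI (ν - 1) t) ≤ (2 * ν / t + 1) * F := by
    have := mul_le_mul_of_nonneg_left (besselI_sub_one_le (ν := ν) (by linarith) ht)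
      (mul_nonneg (exp_pos (-γ * t)).le (rpow_nonneg ht.le ν))
    rw [hF_def, expWeightedBesselI]
    linarith
  have hAt' : 0 ≤ 1 - A / t := sub_nonneg.mpr ((div_le_one ht).mpr hAt)
  have hcoef : A * (1 - 2 * ν) / t ^ 2 + (2 * ν - (1 - γ) * A) / t ≤ 0 :=
    add_nonpos (div_nonpos_of_nonpos_of_nonneg (mul_nonpos_of_nonneg_of_nonpos hA.le (by linarith))
      (by positivity))
      (div_nonpos_of_nonpos_of_nonneg (sub_nonpos.mpr hAν) ht.le)
  calc A / t ^ 2 * F + (1 - A / t) * (-γ * F + exp (-γ * t) * (t ^ ν * besselI (ν - 1) t))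
      ≤ A / t ^ 2 * F + (1 - A / t) * (-γ * F + (2 * ν / t + 1) * F) := by gcongr
    _ = (1 - γ) * F + (A * (1 - 2 * ν) / t ^ 2 + (2 * ν - (1 - γ) * A) / t) * F := by
      field_simp
      ring
    _ ≤ (1 - γ) * F := add_le_of_nonpos_right (mul_nonpos_of_nonpos_of_nonneg hcoef hF)

lemma one_sub_div_mul_expWeightedBesselI_le_integral (hν : 1 / 2 ≤ ν) (hA : 0 < A)
    (hAν : 2 * ν ≤ (1 - γ) * A) (hAb : A ≤ b) :
    (1 - A / b) * expWeightedBesselI γ ν b ≤ (1 - γ) * ∫ t in A..b, expWeightedBesselI γ ν t := by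
  have hderiv : ∀ t, A ≤ t → HasDerivAt (fun s => (1 - A / s) * expWeightedBesselI γ ν s)
      (A / t ^ 2 * expWeightedBesselI γ ν t + (1 - A / t) *
        (-γ * expWeightedBesselI γ ν t + exp (-γ * t) * (t ^ ν * besselI (ν - 1) t))) t := by
    intro t hAt
    have ht := hA.trans_le hAt
    have hinv : HasDerivAt (fun s => 1 - A / s) (A / t ^ 2) t := by
      simpa [div_eq_mul_inv] using ((hasDerivAt_inv ht.ne').const_mul A).const_sub 1
    exact hinv.mul (hasDerivAt_expWeightedBesselI hν ht)
  have h := intervalIntegral.sub_le_integral_of_hasDeriv_right_of_le hAb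
    (fun t ht => (hderiv t ht.1).continuousAt.continuousWithinAt)
    (fun t ht => (hderiv t ht.1.le).hasDerivWithinAt)
    ((intervalIntegrable_iff_integrableOn_Icc_of_le hAb).mp
      ((intervalIntegrable_expWeightedBesselI (by linarith) hA.le (hA.le.trans hAb)).const_mul _))
    (fun t ht => deriv_one_sub_div_mul_expWeightedBesselI_le hν hA hAν ht.1.le)
  rwa [div_self hA.ne', sub_self, zero_mul, sub_zero, intervalIntegral.integral_const_mul] at h

end Weighted

theorem stmt_7_general (γ ν : ℝ) (hγ1 : γ < 1) (hν : 1/2 < ν) (x : ℝ) (hx : 0 < x) :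
    ∫ t in (0 : ℝ)..x, Real.exp (-γ * t) * t ^ ν * besselI ν t >
      (1 / (1 - γ)) * (1 - 4 * ν * (2 * ν + 5) / ((2 * ν - 1) * (1 - γ) * x)) *
        (Real.exp (-γ * x) * x ^ ν * besselI ν x) := by
  have hγ : 0 < 1 - γ := by linarith
  rw [← div_div]
  set A := 4 * ν * (2 * ν + 5) / ((2 * ν - 1) * (1 - γ)) with hA_def
  have hA : 0 < A := div_pos (by nlinarith) (mul_pos (by linarith) hγ)
  have hAν : 2 * ν ≤ (1 - γ) * A := by
    have hγA : (1 - γ) * A = 4 * ν * (2 * ν + 5) / (2 * ν - 1) := by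
      rw [hA_def]
      field_simp
    rw [hγA, le_div_iff₀ (by linarith)]
    nlinarith
  change (1 / (1 - γ)) * (1 - A / x) * expWeightedBesselI γ ν x
    < ∫ t in (0 : ℝ)..x, expWeightedBesselI γ ν t
  rcases le_or_gt x A with hxA | hAx
  · have hFx := expWeightedBesselI_pos (γ := γ) (show -1 < ν by linarith) hx
    have hcoef : 1 - A / x ≤ 0 := sub_nonpos.mpr ((one_le_div hx).mpr hxA)
    calc (1 / (1 - γ)) * (1 - A / x) * expWeightedBesselI γ ν x ≤ 0 :=
          mul_nonpos_of_nonpos_of_nonneg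
            (mul_nonpos_of_nonneg_of_nonpos (by positivity) hcoef) hFx.le
      _ < _ := integral_expWeightedBesselI_pos (by linarith) hx
  · rw [← intervalIntegral.integral_add_adjacent_intervals
      (intervalIntegrable_expWeightedBesselI (by linarith) le_rfl hA.le)
      (intervalIntegrable_expWeightedBesselI (by linarith) hA.le hx.le)]
    have htail := one_sub_div_mul_expWeightedBesselI_le_integral hν.le hA hAν hAx.le
    calc (1 / (1 - γ)) * (1 - A / x) * expWeightedBesselI γ ν x
        ≤ ∫ t in A..x, expWeightedBesselI γ ν t := by
          rw [mul_assoc, one_div_mul_eq_div, div_le_iff₀' hγ]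
          exact htail
      _ < _ := lt_add_of_pos_left _ (integral_expWeightedBesselI_pos (by linarith) hA)

theorem stmt_7 (γ ν : ℝ) (hγ0 : 0 < γ) (hγ1 : γ < 1) (hν : 1/2 < ν) (x : ℝ) (hx : 0 < x) :
    ∫ t in (0 : ℝ)..x, Real.exp (-γ * t) * t ^ ν * besselI ν t >
      (1 / (1 - γ)) * (1 - 4 * ν * (2 * ν + 5) / ((2 * ν - 1) * (1 - γ) * x)) *
        (Real.exp (-γ * x) * x ^ ν * besselI ν x) :=
  stmt_7_general γ ν hγ1 hν x hx
end

section
/- Let 0 < γ < 1 and −1/2 < ν ≤ 0. Then for all x > 0, ∫_0^x e^{−γt} t^ν I_{ν+1}(t) dt > (1/(1−γ)) · { e^{−γx} x^ν ( I_ν(x) − x^ν/(Γ(ν+1)·2^ν) ) − γ(2ν+1, γx)/(Γ(ν+1)·2^ν·γ^{2ν}) }, where γ(a,x) denotes the lower incomplete gamma function. -/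
open Real MeasureTheory

/-!
Write `I_μ(t) = t^μ g_μ(t)` with the entire even series `g_μ = besselSeries μ`. Then
`g_μ' = t g_{μ+1}` and `g_μ - (2μ+2) g_{μ+1} = t² g_{μ+2}`, so `eᵗ (g_ν - t g_{ν+1})` has derivative
`(2ν+1) eᵗ g_{ν+1} > 0`, whence `t g_{ν+1}(t) < g_ν(t)` for `t ≥ 0`.
Now `(1-γ)` times the difference of the two sides, as a function of `x`, vanishes at `0` and has
derivative `e^{-γx} (γ x^{2ν} (g_ν - x g_{ν+1}) - 2ν x^{2ν-1} (g_ν - g_ν(0)))`, which is positive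
because `γ > 0`, `ν ≤ 0` and `g_ν` increases on `[0, ∞)`.
-/

open Filter Topology Set Nat

noncomputable def besselCoeff (ν : ℝ) (k : ℕ) : ℝ :=
  ((2 : ℝ) ^ (ν + 2 * (k : ℝ)) * Gamma (ν + k + 1) * k !)⁻¹

noncomputable def besselSeries (ν t : ℝ) : ℝ :=
  ∑' k : ℕ, besselCoeff ν k * t ^ (2 * k)

lemma besselI_eq_rpow_mul_besselSeries (ν : ℝ) {t : ℝ} (ht : 0 < t) :
    besselI ν t = t ^ ν * besselSeries ν t := by
  rw [besselI, besselSeries, ← tsum_mul_left]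
  refine tsum_congr fun k ↦ ?_
  rw [besselCoeff, div_rpow ht.le two_pos.le, rpow_add ht ν,
    show t ^ (2 * (k : ℝ)) = t ^ (2 * k) by norm_cast]
  ring

lemma besselCoeff_succ_mul_two_mul (ν : ℝ) (k : ℕ) :
    besselCoeff ν (k + 1) * (2 * (k + 1)) = besselCoeff (ν + 1) k := by
  have h2 : (2 : ℝ) ^ (ν + 2 * ((k + 1 : ℕ) : ℝ)) = 2 ^ (ν + 1 + 2 * (k : ℝ)) * 2 := by
    rw [show ν + 2 * ((k + 1 : ℕ) : ℝ) = ν + 1 + 2 * (k : ℝ) + 1 by push_cast; ring,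
      rpow_add_one two_ne_zero]
  have hk : (2 * (k + 1) : ℝ) ≠ 0 := by positivity
  rw [besselCoeff, besselCoeff, h2, factorial_succ,
    show ν + ((k + 1 : ℕ) : ℝ) + 1 = ν + 1 + k + 1 by push_cast; ring]
  push_cast
  rw [show 2 ^ (ν + 1 + 2 * (k : ℝ)) * 2 * Gamma (ν + 1 + k + 1) * ((k + 1) * k !) =
    2 ^ (ν + 1 + 2 * (k : ℝ)) * Gamma (ν + 1 + k + 1) * k ! * (2 * (k + 1)) by ring, mul_inv,
    inv_mul_cancel_right₀ hk]

lemma besselCoeff_zero (ν : ℝ) : besselCoeff ν 0 = (Gamma (ν + 1) * 2 ^ ν)⁻¹ := by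
  simp [besselCoeff, mul_comm]

lemma besselCoeff_pos {ν : ℝ} (hν : -1 < ν) (k : ℕ) : 0 < besselCoeff ν k := by
  have := Gamma_pos_of_pos (show 0 < ν + k + 1 by linarith [(k.cast_nonneg : (0 : ℝ) ≤ k)])
  unfold besselCoeff
  positivity

lemma besselCoeff_eq_mul_besselCoeff_add_one {ν : ℝ} (hν : -1 < ν) (k : ℕ) :
    besselCoeff ν k = 2 * (ν + k + 1) * besselCoeff (ν + 1) k := by
  have hpos : 0 < ν + k + 1 := by linarith [(k.cast_nonneg : (0 : ℝ) ≤ k)]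
  have hΓ := Gamma_pos_of_pos hpos
  rw [besselCoeff, besselCoeff, show ν + 1 + k + 1 = (ν + k + 1) + 1 by ring,
    Gamma_add_one hpos.ne', show ν + 1 + 2 * (k : ℝ) = ν + 2 * k + 1 by ring,
    rpow_add_one two_ne_zero]
  field_simp

lemma besselCoeff_succ_mul {ν : ℝ} (hν : -1 < ν) (k : ℕ) :
    besselCoeff ν (k + 1) * (4 * (ν + k + 1) * (k + 1)) = besselCoeff ν k := by
  linear_combination (2 * (ν + k + 1)) * besselCoeff_succ_mul_two_mul ν k -
    besselCoeff_eq_mul_besselCoeff_add_one hν k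

lemma besselCoeff_mul_le {ν : ℝ} (hν : -1 < ν) (k : ℕ) :
    besselCoeff ν k * ((4 * (ν + 1)) ^ k * k !) ≤ besselCoeff ν 0 := by
  induction k with
  | zero => simp
  | succ k ih =>
    have hc := besselCoeff_pos hν (k + 1)
    calc besselCoeff ν (k + 1) * ((4 * (ν + 1)) ^ (k + 1) * (k + 1) !)
        = besselCoeff ν (k + 1) * (4 * (ν + 1) * (k + 1)) * ((4 * (ν + 1)) ^ k * k !) := by
          push_cast [factorial_succ]; ring
      _ ≤ besselCoeff ν (k + 1) * (4 * (ν + k + 1) * (k + 1)) * ((4 * (ν + 1)) ^ k * k !) := by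
          gcongr
          · exact mul_nonneg (pow_nonneg (by linarith) _) (by positivity)
          · linarith [(k.cast_nonneg : (0 : ℝ) ≤ k)]
      _ ≤ besselCoeff ν 0 := by rwa [besselCoeff_succ_mul hν]

lemma summable_besselCoeff_mul_pow {ν : ℝ} (hν : -1 < ν) (r : ℝ) :
    Summable (fun k ↦ besselCoeff ν k * r ^ k) := by
  have hq : 0 < 4 * (ν + 1) := by linarith
  refine .of_norm_bounded ((summable_pow_div_factorial (|r| / (4 * (ν + 1)))).mul_left
    (besselCoeff ν 0)) fun k ↦ ?_
  have hc := besselCoeff_pos hν k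
  rw [norm_mul, norm_pow, Real.norm_of_nonneg hc.le, Real.norm_eq_abs]
  calc besselCoeff ν k * |r| ^ k
      = besselCoeff ν k * ((4 * (ν + 1)) ^ k * k !) * ((|r| / (4 * (ν + 1))) ^ k / k !) := by
        rw [div_pow]; field_simp
    _ ≤ besselCoeff ν 0 * ((|r| / (4 * (ν + 1))) ^ k / k !) := by
        gcongr
        exact besselCoeff_mul_le hν k

lemma summable_besselSeries {ν : ℝ} (hν : -1 < ν) (t : ℝ) :
    Summable (fun k ↦ besselCoeff ν k * t ^ (2 * k)) := by
  simpa only [pow_mul] using summable_besselCoeff_mul_pow hν (t ^ 2)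

lemma besselSeries_zero (ν : ℝ) : besselSeries ν 0 = besselCoeff ν 0 := by
  rw [besselSeries, tsum_eq_single 0 fun k hk ↦ by simp [hk]]
  simp

lemma besselCoeff_zero_le_besselSeries {ν : ℝ} (hν : -1 < ν) (t : ℝ) :
    besselCoeff ν 0 ≤ besselSeries ν t := by
  have h := (summable_besselSeries hν t).le_tsum 0 fun k _ ↦
    mul_nonneg (besselCoeff_pos hν k).le (by rw [pow_mul]; positivity)
  simpa [besselSeries] using h

lemma besselSeries_pos {ν : ℝ} (hν : -1 < ν) (t : ℝ) : 0 < besselSeries ν t :=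
  (besselCoeff_pos hν 0).trans_le (besselCoeff_zero_le_besselSeries hν t)

lemma besselSeries_eq_add_tsum {ν : ℝ} (hν : -1 < ν) (t : ℝ) :
    besselSeries ν t = besselCoeff ν 0 + ∑' k : ℕ, besselCoeff ν (k + 1) * t ^ (2 * k + 2) := by
  rw [besselSeries, (summable_besselSeries hν t).tsum_eq_zero_add]
  simp only [mul_zero, pow_zero, mul_one, mul_add]

lemma hasDerivAt_besselSeries {ν : ℝ} (hν : -1 < ν) (t : ℝ) :
    HasDerivAt (besselSeries ν) (t * besselSeries (ν + 1) t) t := by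
  have hν1 : -1 < ν + 1 := by linarith
  set R := |t| + 1 with hR
  have hterm (k : ℕ) (y : ℝ) : HasDerivAt (fun y ↦ besselCoeff ν (k + 1) * y ^ (2 * k + 2))
      (besselCoeff (ν + 1) k * y ^ (2 * k + 1)) y := by
    refine ((hasDerivAt_pow (2 * k + 2) y).const_mul (besselCoeff ν (k + 1))).congr_deriv ?_
    rw [← besselCoeff_succ_mul_two_mul]
    push_cast
    ring
  have hbound (k : ℕ) (y : ℝ) (hy : y ∈ Metric.ball 0 R) :
      ‖besselCoeff (ν + 1) k * y ^ (2 * k + 1)‖ ≤ R * (besselCoeff (ν + 1) k * (R ^ 2) ^ k) := by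
    have hyR : ‖y‖ ≤ R := (mem_ball_zero_iff.mp hy).le
    have hc := besselCoeff_pos hν1 k
    rw [norm_mul, norm_pow, Real.norm_of_nonneg hc.le, ← pow_mul]
    calc besselCoeff (ν + 1) k * ‖y‖ ^ (2 * k + 1) ≤ besselCoeff (ν + 1) k * R ^ (2 * k + 1) := by
          gcongr
      _ = R * (besselCoeff (ν + 1) k * R ^ (2 * k)) := by ring
  have htail := hasDerivAt_tsum_of_isPreconnected
    ((summable_besselCoeff_mul_pow hν1 (R ^ 2)).mul_left R) Metric.isOpen_ball
    (convex_ball 0 R).isPreconnected (fun k y _ ↦ hterm k y) hbound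
    (Metric.mem_ball_self (by positivity)) (by simp) (show t ∈ Metric.ball 0 R by simp [hR])
  rw [funext (besselSeries_eq_add_tsum hν)]
  refine (htail.const_add (besselCoeff ν 0)).congr_deriv ?_
  rw [besselSeries, ← tsum_mul_left]
  exact tsum_congr fun k ↦ by ring

lemma besselSeries_sub_mul_besselSeries_add_one {ν : ℝ} (hν : -1 < ν) (t : ℝ) :
    besselSeries ν t - (2 * ν + 2) * besselSeries (ν + 1) t = t ^ 2 * besselSeries (ν + 2) t := by
  have hsum := (summable_besselSeries hν t).hasSum.sub
    ((summable_besselSeries (show -1 < ν + 1 by linarith) t).hasSum.mul_left (2 * ν + 2))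
  have htail : HasSum (fun k : ℕ ↦ besselCoeff ν (k + 1) * t ^ (2 * (k + 1)) -
      (2 * ν + 2) * (besselCoeff (ν + 1) (k + 1) * t ^ (2 * (k + 1))))
      (t ^ 2 * besselSeries (ν + 2) t) := by
    refine ((summable_besselSeries (show -1 < ν + 2 by linarith) t).hasSum.mul_left
      (t ^ 2)).congr_fun fun k ↦ ?_
    have hc := besselCoeff_eq_mul_besselCoeff_add_one hν (k + 1)
    have hd := besselCoeff_succ_mul_two_mul (ν + 1) k
    rw [show ν + 1 + 1 = ν + 2 by ring] at hd
    push_cast at hc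
    rw [show 2 * (k + 1) = 2 * k + 2 by ring, pow_add]
    linear_combination (t ^ (2 * k) * t ^ 2) * (hc + hd)
  have h0 : besselCoeff ν 0 - (2 * ν + 2) * besselCoeff (ν + 1) 0 = 0 := by
    rw [besselCoeff_eq_mul_besselCoeff_add_one hν 0]; push_cast; ring
  have := ((hasSum_nat_add_iff' 1).mpr hsum).unique htail
  simp only [Finset.range_one, Finset.sum_singleton, mul_zero, pow_zero, mul_one, h0,
    sub_zero] at this
  exact this

lemma mul_besselSeries_add_one_lt {ν : ℝ} (hν : -(1 / 2) < ν) (t : ℝ) :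
    t * besselSeries (ν + 1) t < besselSeries ν t := by
  have hν0 : -1 < ν := by linarith
  have hν1 : -1 < ν + 1 := by linarith
  rcases lt_or_ge t 0 with ht | ht
  · nlinarith [besselSeries_pos hν1 t, besselSeries_pos hν0 t]
  set p := fun s ↦ exp s * (besselSeries ν s - s * besselSeries (ν + 1) s)
  have hp (s : ℝ) : HasDerivAt p ((2 * ν + 1) * (exp s * besselSeries (ν + 1) s)) s := by
    refine ((hasDerivAt_exp s).mul ((hasDerivAt_besselSeries hν0 s).sub
      ((hasDerivAt_id s).mul (hasDerivAt_besselSeries hν1 s)))).congr_deriv ?_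
    have hrec := besselSeries_sub_mul_besselSeries_add_one hν0 s
    rw [show ν + 1 + 1 = ν + 2 by ring]
    simp only [Pi.sub_apply, Pi.mul_apply, id]
    linear_combination exp s * hrec
  have hmono := monotone_of_hasDerivAt_nonneg hp fun s ↦
    mul_nonneg (by linarith) (mul_nonneg (exp_pos s).le (besselSeries_pos hν1 s).le)
  have h0 : p 0 = besselCoeff ν 0 := by simp [p, besselSeries_zero]
  have hpt : 0 < p t := (h0 ▸ besselCoeff_pos hν0 0).trans_le (hmono ht)
  have := pos_of_mul_pos_right hpt (exp_pos t).le
  linarith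

lemma continuous_besselSeries {ν : ℝ} (hν : -1 < ν) : Continuous (besselSeries ν) :=
  continuous_iff_continuousAt.2 fun t ↦ (hasDerivAt_besselSeries hν t).continuousAt

lemma intervalIntegrable_rpow_sub_one_mul_exp_neg {a : ℝ} (ha : 0 < a) (b c : ℝ) :
    IntervalIntegrable (fun t ↦ t ^ (a - 1) * exp (-t)) volume b c :=
  (intervalIntegral.intervalIntegrable_rpow' (by linarith)).mul_continuousOn
    (continuous_exp.comp continuous_neg).continuousOn

lemma lowerIncGamma_zero (a : ℝ) : lowerIncGamma a 0 = 0 :=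
  intervalIntegral.integral_same

lemma continuous_lowerIncGamma {a : ℝ} (ha : 0 < a) : Continuous (lowerIncGamma a) :=
  intervalIntegral.continuous_primitive (intervalIntegrable_rpow_sub_one_mul_exp_neg ha) 0

lemma hasDerivAt_lowerIncGamma {a x : ℝ} (ha : 0 < a) (hx : x ≠ 0) :
    HasDerivAt (lowerIncGamma a) (x ^ (a - 1) * exp (-x)) x := by
  have hcont : ContinuousAt (fun t ↦ t ^ (a - 1) * exp (-t)) x :=
    (continuousAt_rpow_const _ _ (Or.inl hx)).mul (continuous_exp.comp continuous_neg).continuousAt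
  have hmeas : Measurable fun t ↦ t ^ (a - 1) * exp (-t) := by fun_prop
  exact intervalIntegral.integral_hasDerivAt_right
    (intervalIntegrable_rpow_sub_one_mul_exp_neg ha 0 x)
    hmeas.stronglyMeasurable.stronglyMeasurableAtFilter hcont

lemma tendsto_rpow_mul_sub_nhdsGT_zero {f : ℝ → ℝ} {f' r : ℝ} (hf : HasDerivAt f f' 0)
    (hr : -1 < r) : Tendsto (fun y ↦ y ^ r * (f y - f 0)) (𝓝[>] 0) (𝓝 0) := by
  have hpow : Tendsto (fun y : ℝ ↦ y ^ (r + 1)) (𝓝[>] 0) (𝓝 0) := by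
    have := (continuousAt_rpow_const 0 (r + 1) (Or.inr (by linarith))).tendsto
    rw [zero_rpow (by linarith)] at this
    exact this.mono_left nhdsWithin_le_nhds
  have := hpow.mul hf.tendsto_slope_zero_right
  rw [zero_mul] at this
  refine this.congr' ?_
  filter_upwards [self_mem_nhdsWithin] with y (hy : 0 < y)
  rw [rpow_add hy, rpow_one, smul_eq_mul, zero_add]
  field_simp

section Gap

variable {γ ν : ℝ}

/-- `(1 - γ)` times the difference of the two sides of the inequality at `x = y`, written with
`I_μ(t) = t^μ besselSeries μ t`. -/
noncomputable def besselGap (γ ν y : ℝ) : ℝ :=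
  (1 - γ) * (∫ t in (0 : ℝ)..y, exp (-γ * t) * (t ^ (2 * ν + 1) * besselSeries (ν + 1) t))
    - exp (-γ * y) * (y ^ (2 * ν) * (besselSeries ν y - besselCoeff ν 0))
    + besselCoeff ν 0 / γ ^ (2 * ν) * lowerIncGamma (2 * ν + 1) (γ * y)

lemma besselGap_zero : besselGap γ ν 0 = 0 := by
  simp [besselGap, besselSeries_zero, lowerIncGamma_zero]

lemma continuous_exp_mul_rpow_mul_besselSeries (hν : -(1 / 2) < ν) :
    Continuous fun t ↦ exp (-γ * t) * (t ^ (2 * ν + 1) * besselSeries (ν + 1) t) := by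
  have := continuous_besselSeries (show -1 < ν + 1 by linarith)
  have := Real.continuous_rpow_const (show 0 ≤ 2 * ν + 1 by linarith)
  fun_prop

lemma continuousWithinAt_besselGap_zero (hν : -(1 / 2) < ν) :
    ContinuousWithinAt (besselGap γ ν) (Ici 0) 0 := by
  have hJ := intervalIntegral.continuous_primitive (μ := volume)
    (continuous_exp_mul_rpow_mul_besselSeries (γ := γ) hν).intervalIntegrable 0
  have hL : Continuous fun y ↦ lowerIncGamma (2 * ν + 1) (γ * y) :=
    (continuous_lowerIncGamma (by linarith)).comp (continuous_const.mul continuous_id)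
  have hA : ContinuousWithinAt
      (fun y ↦ exp (-γ * y) * (y ^ (2 * ν) * (besselSeries ν y - besselCoeff ν 0))) (Ioi 0) 0 := by
    have h := tendsto_rpow_mul_sub_nhdsGT_zero (hasDerivAt_besselSeries (by linarith) 0)
      (show -1 < 2 * ν by linarith)
    rw [besselSeries_zero] at h
    have he : Tendsto (fun y ↦ exp (-γ * y)) (𝓝[>] 0) (𝓝 (exp (-γ * 0))) :=
      ((continuous_exp.comp (continuous_const.mul continuous_id)).tendsto 0).mono_left
        nhdsWithin_le_nhds
    simpa [ContinuousWithinAt, besselSeries_zero] using he.mul h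
  rw [← continuousWithinAt_Ioi_iff_Ici]
  exact ((continuousWithinAt_const.mul hJ.continuousWithinAt).sub hA).add
    (continuousWithinAt_const.mul hL.continuousWithinAt)

lemma hasDerivAt_besselGap (hν : -(1 / 2) < ν) (hγ : 0 < γ) {y : ℝ} (hy : 0 < y) :
    HasDerivAt (besselGap γ ν) (exp (-γ * y) *
      (γ * y ^ (2 * ν) * (besselSeries ν y - y * besselSeries (ν + 1) y)
        - 2 * ν * y ^ (2 * ν - 1) * (besselSeries ν y - besselCoeff ν 0))) y := by
  have hJ := (continuous_exp_mul_rpow_mul_besselSeries (γ := γ) hν).integral_hasStrictDerivAt 0 y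
  have hexp : HasDerivAt (fun y ↦ exp (-γ * y)) (exp (-γ * y) * -γ) y :=
    ((hasDerivAt_id y).const_mul (-γ)).exp.congr_deriv (by simp)
  have hA := hexp.mul ((hasDerivAt_rpow_const (p := 2 * ν) (Or.inl hy.ne')).mul
    ((hasDerivAt_besselSeries (ν := ν) (by linarith) y).sub_const (besselCoeff ν 0)))
  have hL := (hasDerivAt_lowerIncGamma (show 0 < 2 * ν + 1 by linarith)
    (mul_pos hγ hy).ne').comp y ((hasDerivAt_id y).const_mul γ)
  refine (((hJ.hasDerivAt.const_mul (1 - γ)).sub hA).add (hL.const_mul _)).congr_deriv ?_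
  have hγν : γ ^ (2 * ν) ≠ 0 := (rpow_pos_of_pos hγ _).ne'
  rw [show 2 * ν + 1 - 1 = 2 * ν by ring, mul_rpow hγ.le hy.le, rpow_add hy, rpow_one]
  simp only [Pi.mul_apply]
  field_simp
  ring

lemma besselGap_pos (hγ : 0 < γ) (hν : -(1 / 2) < ν) (hν' : ν ≤ 0) {x : ℝ} (hx : 0 < x) :
    0 < besselGap γ ν x := by
  have hcont : ContinuousOn (besselGap γ ν) (Ici 0) := by
    intro y hy
    rcases (mem_Ici.mp hy).eq_or_lt with rfl | hy
    · exact continuousWithinAt_besselGap_zero hν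
    · exact (hasDerivAt_besselGap hν hγ hy).continuousAt.continuousWithinAt
  have hderiv (y : ℝ) (hy : y ∈ interior (Ici 0)) : 0 < deriv (besselGap γ ν) y := by
    rw [interior_Ici] at hy
    rw [(hasDerivAt_besselGap hν hγ hy).deriv]
    have hlt := mul_besselSeries_add_one_lt hν y
    have hc := besselCoeff_zero_le_besselSeries (show -1 < ν by linarith) y
    have h1 := rpow_pos_of_pos hy (2 * ν)
    have h2 := rpow_pos_of_pos hy (2 * ν - 1)
    have hneg : 2 * ν * y ^ (2 * ν - 1) * (besselSeries ν y - besselCoeff ν 0) ≤ 0 :=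
      mul_nonpos_of_nonpos_of_nonneg (mul_nonpos_of_nonpos_of_nonneg (by linarith) h2.le)
        (sub_nonneg.2 hc)
    have hpos : 0 < γ * y ^ (2 * ν) * (besselSeries ν y - y * besselSeries (ν + 1) y) :=
      mul_pos (mul_pos hγ h1) (sub_pos.2 hlt)
    exact mul_pos (exp_pos _) (by linarith)
  simpa [besselGap_zero] using
    strictMonoOn_of_deriv_pos (convex_Ici 0) hcont hderiv (mem_Ici.2 le_rfl) hx.le hx

end Gap

theorem stmt_17 (γ ν : ℝ) (hγ0 : 0 < γ) (hγ1 : γ < 1) (hν1 : -(1/2) < ν) (hν2 : ν ≤ 0)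
    (x : ℝ) (hx : 0 < x) :
    ∫ t in (0 : ℝ)..x, Real.exp (-γ * t) * t ^ ν * besselI (ν + 1) t >
      (1 / (1 - γ)) *
        (Real.exp (-γ * x) * x ^ ν * (besselI ν x - x ^ ν / (Real.Gamma (ν + 1) * 2 ^ ν)) -
          lowerIncGamma (2 * ν + 1) (γ * x) / (Real.Gamma (ν + 1) * 2 ^ ν * γ ^ (2 * ν))) := by
  have hJ : ∫ t in (0 : ℝ)..x, exp (-γ * t) * t ^ ν * besselI (ν + 1) t
      = ∫ t in (0 : ℝ)..x, exp (-γ * t) * (t ^ (2 * ν + 1) * besselSeries (ν + 1) t) := by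
    refine intervalIntegral.integral_congr_ae (Eventually.of_forall fun t ht ↦ ?_)
    rw [uIoc_of_le hx.le] at ht
    rw [besselI_eq_rpow_mul_besselSeries _ ht.1, show 2 * ν + 1 = ν + (ν + 1) by ring,
      rpow_add ht.1 ν (ν + 1)]
    ring
  have hA : exp (-γ * x) * x ^ ν * (besselI ν x - x ^ ν / (Gamma (ν + 1) * 2 ^ ν))
      = exp (-γ * x) * (x ^ (2 * ν) * (besselSeries ν x - besselCoeff ν 0)) := by
    rw [besselI_eq_rpow_mul_besselSeries _ hx, besselCoeff_zero, two_mul, rpow_add hx]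
    ring
  have hL : lowerIncGamma (2 * ν + 1) (γ * x) / (Gamma (ν + 1) * 2 ^ ν * γ ^ (2 * ν))
      = besselCoeff ν 0 / γ ^ (2 * ν) * lowerIncGamma (2 * ν + 1) (γ * x) := by
    rw [besselCoeff_zero]
    ring
  have hgap := besselGap_pos hγ0 hν1 hν2 hx
  rw [besselGap] at hgap
  rw [gt_iff_lt, hJ, hA, hL, one_div_mul_eq_div, div_lt_iff₀ (by linarith)]
  linarith
end
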